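/- arXiv:1111.7274 — 2 statements merged into one kernel-verified Lean document; each statement's English description precedes it below -/
import Mathlib

section
/- Let G be a Lie group with a right-invariant Riemannian metric, and suppose exp : B(0, r_g) ⊂ 𝔤 → G is a diffeomorphism onto its image containing the ball B_G(e, C_G) for some r_g, C_G > 0. Then for every g ∈ G there exist k ≥ 1 and Z₁, …, Z_k ∈ 𝔤 with |Z_i| < r_g for all i, g = exp(Z_k) ⋯ exp(Z₁), and k ≤ d(e, g)/C_G + 2. -/
/-!
Cut a minimizing geodesic from `e` to `g` into `k = ⌊d(e,g)/C_G⌋ + 1` pieces of equal length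
`d(e,g)/k < C_G`. By right-invariance, the quotient `γ(t_{i+1}) γ(t_i)⁻¹` of consecutive
subdivision points lies at distance `d(e,g)/k` from `e`, hence in `B_G(e, C_G)`, so it is an
exponential `exp Z_i` with `‖Z_i‖ < r_g`; the product of these quotients telescopes to `g`.
-/

open Set Metric

theorem List.prod_reverse_ofFn_mul_inv {G : Type*} [Group G] (f : ℕ → G) (n : ℕ) :
    ((List.ofFn fun i : Fin n => f (i + 1) * (f i)⁻¹).reverse).prod = f n * (f 0)⁻¹ := by
  induction n with
  | zero => simp
  | succ n ih =>
    rw [List.ofFn_succ', List.concat_eq_append, List.reverse_concat, List.prod_cons]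
    simp only [Fin.val_last, Fin.val_castSucc, ih, mul_assoc, inv_mul_cancel_left]

theorem div_nat_floor_div_add_one_lt (x : ℝ) {C : ℝ} (hC : 0 < C) :
    x / (⌊x / C⌋₊ + 1 : ℕ) < C := by
  rw [div_lt_iff₀ (by positivity), ← div_lt_iff₀' hC]
  exact_mod_cast Nat.lt_floor_add_one (x / C)

theorem natCast_mul_div_mem_Icc {D : ℝ} (hD : 0 ≤ D) {n k : ℕ} (hnk : n ≤ k) :
    (n : ℝ) * D / k ∈ Icc 0 D := by
  refine ⟨by positivity, div_le_of_le_mul₀ k.cast_nonneg hD ?_⟩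
  rw [mul_comm]
  exact mul_le_mul_of_nonneg_left (by exact_mod_cast hnk) hD

section RightInvariant

variable {G : Type*} [Group G] [PseudoMetricSpace G]
  (hinv : ∀ a b c : G, dist (a * c) (b * c) = dist a b)
include hinv

theorem dist_one_mul_inv_of_right_invariant (a b : G) : dist 1 (a * b⁻¹) = dist b a := by
  simpa using hinv b a b⁻¹

theorem dist_one_geodesic_subdivision_quotient {γ : ℝ → G} {D : ℝ} (hD : 0 ≤ D)
    (hγ : ∀ s ∈ Icc 0 D, ∀ t ∈ Icc 0 D, dist (γ s) (γ t) = |s - t|) {i k : ℕ} (hik : i < k) :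
    dist 1 (γ ((i + 1 : ℕ) * D / k) * (γ (i * D / k))⁻¹) = D / k := by
  rw [dist_one_mul_inv_of_right_invariant hinv,
    hγ _ (natCast_mul_div_mem_Icc hD hik.le) _ (natCast_mul_div_mem_Icc hD hik)]
  have hstep : ((i + 1 : ℕ) : ℝ) * D / k - i * D / k = D / k := by push_cast; ring
  rw [abs_sub_comm, hstep, abs_of_nonneg (by positivity)]

end RightInvariant

theorem group_exp_product_decomposition_general {G : Type*} [Group G] [MetricSpace G]
    {E : Type*} [NormedAddCommGroup E] [NormedSpace ℝ E]
    (exp : E → G) (r_g C_G : ℝ) (hCG : 0 < C_G)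
    (hinv : ∀ a b c : G, dist (a * c) (b * c) = dist a b)
    (hgeo : ∀ g : G, ∃ γ : ℝ → G, γ 0 = 1 ∧ γ (dist (1 : G) g) = g ∧
      ∀ s ∈ Set.Icc (0 : ℝ) (dist (1 : G) g), ∀ t ∈ Set.Icc (0 : ℝ) (dist (1 : G) g),
        dist (γ s) (γ t) = |s - t|)
    (hball : Metric.ball (1 : G) C_G ⊆ exp '' Metric.ball (0 : E) r_g) :
    ∀ g : G, ∃ (k : ℕ) (Z : Fin k → E), 1 ≤ k ∧ (∀ i, ‖Z i‖ < r_g) ∧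
      g = ((List.ofFn fun i => exp (Z i)).reverse).prod ∧
      (k : ℝ) ≤ dist (1 : G) g / C_G + 2 := by
  intro g
  obtain ⟨γ, hγ0, hγg, hγ⟩ := hgeo g
  set D := dist (1 : G) g
  have hD : 0 ≤ D := dist_nonneg
  set k := ⌊D / C_G⌋₊ + 1
  set f : ℕ → G := fun n => γ (n * D / k)
  have hquot : ∀ i : Fin k, f (i + 1) * (f i)⁻¹ ∈ exp '' ball 0 r_g := fun i => hball <| by
    rw [mem_ball, dist_comm, dist_one_geodesic_subdivision_quotient hinv hD hγ i.isLt]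
    exact div_nat_floor_div_add_one_lt D hCG
  choose Z hZ hexpZ using hquot
  refine ⟨k, Z, Nat.le_add_left 1 _, fun i => mem_ball_zero_iff.mp (hZ i), ?_, ?_⟩
  · rw [funext hexpZ, List.prod_reverse_ofFn_mul_inv]
    simp only [f, CharP.cast_eq_zero, zero_mul, zero_div, hγ0, inv_one, mul_one]
    rw [mul_div_cancel_left₀ D (by positivity), hγg]
  · have hfloor := Nat.floor_le (div_nonneg hD hCG.le)
    push_cast [k]
    linarith

/-- Lemma B.4 (GCover), decomposition part: in a group with a right-invariant
geodesic metric, if `exp` maps the ball `B(0, r_g)` of the Lie algebra onto a set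
containing `B_G(e, C_G)`, then every `g` is a product `exp(Z_k) ⋯ exp(Z₁)` of at
most `d(e,g)/C_G + 2` exponentials with `‖Z_i‖ < r_g`. -/
theorem group_exp_product_decomposition {G : Type*} [Group G] [MetricSpace G]
    {E : Type*} [NormedAddCommGroup E] [NormedSpace ℝ E]
    (exp : E → G) (r_g C_G : ℝ) (hr : 0 < r_g) (hCG : 0 < C_G)
    (hinv : ∀ a b c : G, dist (a * c) (b * c) = dist a b)
    (hgeo : ∀ g : G, ∃ γ : ℝ → G, γ 0 = 1 ∧ γ (dist (1 : G) g) = g ∧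
      ∀ s ∈ Set.Icc (0 : ℝ) (dist (1 : G) g), ∀ t ∈ Set.Icc (0 : ℝ) (dist (1 : G) g),
        dist (γ s) (γ t) = |s - t|)
    (hball : Metric.ball (1 : G) C_G ⊆ exp '' Metric.ball (0 : E) r_g) :
    ∀ g : G, ∃ (k : ℕ) (Z : Fin k → E), 1 ≤ k ∧ (∀ i, ‖Z i‖ < r_g) ∧
      g = ((List.ofFn fun i => exp (Z i)).reverse).prod ∧
      (k : ℝ) ≤ dist (1 : G) g / C_G + 2 :=
  group_exp_product_decomposition_general exp r_g C_G hCG hinv hgeo hball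
end

section
/- Let K₁, K₂, r, ω, r_g > 0 and N_G ∈ ℕ. Define for m ≥ 1 the sum S_m := Σ_{m'=0}^{m} m^{m'} (K₂ r)^{m'} e^{−ω r_g (m'² + m')/2} (K₁ m^{N_G})^{m'+1}. Then there exist constants K, N' > 0 (depending on K₁, K₂, r, ω, r_g, N_G but not on m) such that S_m ≤ K e^{N' (log m)²} for all m ≥ 2. -/
/-!
Write `c = ω r_g / 2`. The `m'`-th term is at most `K₁ m^{N_G} x^{m'} e^{-c m'²}` with
`x = K₂ r K₁ m^{N_G+1}`, and completing the square in `m' log x - c m'²` bounds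
`x^{m'} e^{-c m'²}` by `e^{(log x)²/(4c)}` uniformly in `m'`. Since `log x` is affine in `log m`,
this is `e^{O((log m)²)}`; the `m + 1` terms and the prefactor `m^{N_G}` only contribute
`e^{O(log m)}`, which is absorbed because `log m ≥ log 2`.
-/

open Real Finset

lemma mul_sub_mul_sq_le_sq_div {c : ℝ} (hc : 0 < c) (a t : ℝ) :
    a * t - c * t ^ 2 ≤ a ^ 2 / (4 * c) := by
  have hsq : 0 ≤ (a - 2 * c * t) ^ 2 / (4 * c) := by positivity
  have hexpand : (a - 2 * c * t) ^ 2 / (4 * c) = a ^ 2 / (4 * c) - (a * t - c * t ^ 2) := by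
    field_simp
    ring
  linarith

lemma pow_mul_exp_neg_mul_sq_le {x c : ℝ} (hx : 0 < x) (hc : 0 < c) (k : ℕ) :
    x ^ k * exp (-(c * (k : ℝ) ^ 2)) ≤ exp (log x ^ 2 / (4 * c)) := by
  rw [← exp_log hx, ← exp_nat_mul, ← exp_add, log_exp]
  gcongr
  linarith [mul_sub_mul_sq_le_sq_div hc (log x) k]

lemma vgrowth_term_le {K₁ K₂ r ω r_g m : ℝ} (hK₁ : 0 < K₁) (hK₂ : 0 < K₂) (hr : 0 < r)
    (hω : 0 < ω) (hrg : 0 < r_g) (hm : 0 < m) (N_G k : ℕ) :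
    m ^ k * (K₂ * r) ^ k * exp (-(ω * r_g * ((k : ℝ) ^ 2 + k) / 2)) * (K₁ * m ^ N_G) ^ (k + 1)
      ≤ K₁ * m ^ N_G * exp (log (K₂ * r * K₁ * m ^ (N_G + 1)) ^ 2 / (4 * (ω * r_g / 2))) := by
  set c := ω * r_g / 2
  set x := K₂ * r * K₁ * m ^ (N_G + 1)
  have hfactor : m ^ k * (K₂ * r) ^ k * exp (-(ω * r_g * ((k : ℝ) ^ 2 + k) / 2))
      * (K₁ * m ^ N_G) ^ (k + 1)
      = K₁ * m ^ N_G * (x ^ k * exp (-(c * (k : ℝ) ^ 2)) * exp (-(c * k))) := by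
    rw [mul_assoc (x ^ k), ← exp_add]
    simp only [x, c, mul_pow, pow_succ, ← pow_mul]
    ring_nf
  rw [hfactor]
  have hdecay : exp (-(c * k)) ≤ 1 := exp_le_one_iff.2 (neg_nonpos.2 (by positivity))
  gcongr
  calc x ^ k * exp (-(c * (k : ℝ) ^ 2)) * exp (-(c * k))
      ≤ x ^ k * exp (-(c * (k : ℝ) ^ 2)) := mul_le_of_le_one_right (by positivity) hdecay
    _ ≤ exp (log x ^ 2 / (4 * c)) := pow_mul_exp_neg_mul_sq_le (by positivity) (by positivity) k

lemma log_mul_pow_sq_le {a m : ℝ} (ha : 0 < a) (hm : 0 < m) (n : ℕ) :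
    log (a * m ^ n) ^ 2 ≤ 2 * log a ^ 2 + 2 * (n : ℝ) ^ 2 * log m ^ 2 := by
  rw [log_mul ha.ne' (pow_pos hm n).ne', log_pow]
  linarith [add_sq_le (a := log a) (b := n * log m)]

lemma succ_mul_pow_le_exp_log_sq {m : ℕ} (hm : 2 ≤ m) (n : ℕ) :
    ((m : ℝ) + 1) * (m : ℝ) ^ n ≤ exp ((n + 2) / log 2 * log m ^ 2) := by
  have hm2 : (2 : ℝ) ≤ m := by exact_mod_cast hm
  have hlog2 : 0 < log 2 := log_pos one_lt_two
  have hlogm : log 2 ≤ log m := log_le_log two_pos hm2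
  calc ((m : ℝ) + 1) * (m : ℝ) ^ n
      ≤ (m : ℝ) ^ 2 * (m : ℝ) ^ n := by gcongr; nlinarith
    _ = exp ((n + 2) * log m) := by
      rw [← pow_add, add_comm 2 n, show (n : ℝ) + 2 = ((n + 2 : ℕ) : ℝ) by push_cast; ring,
        exp_nat_mul, exp_log (by positivity)]
    _ ≤ exp ((n + 2) / log 2 * log m ^ 2) := by
      have hlin : log m ≤ log m ^ 2 / log 2 := by
        rw [le_div_iff₀ hlog2]
        nlinarith
      gcongr exp ?_
      calc ((n : ℝ) + 2) * log m ≤ (n + 2) * (log m ^ 2 / log 2) := by gcongr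
        _ = (n + 2) / log 2 * log m ^ 2 := by ring

/-- Summation estimate at the heart of Lemma B.7 (VGrowthEst): the sum
`S_m = Σ_{m'=0}^m m^{m'} (K₂r)^{m'} e^{−ωr_g(m'²+m')/2} (K₁ m^{N_G})^{m'+1}` grows
at most like `e^{N'(log m)²}`. -/
theorem vgrowth_sum_estimate (K₁ K₂ r ω r_g : ℝ) (N_G : ℕ)
    (hK₁ : 0 < K₁) (hK₂ : 0 < K₂) (hr : 0 < r) (hω : 0 < ω) (hrg : 0 < r_g) :
    ∃ K N' : ℝ, 0 < K ∧ 0 < N' ∧ ∀ m : ℕ, 2 ≤ m →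
      (∑ m' ∈ Finset.range (m + 1),
          (m : ℝ) ^ m' * (K₂ * r) ^ m' *
            Real.exp (-(ω * r_g * ((m' : ℝ) ^ 2 + m') / 2)) *
            (K₁ * (m : ℝ) ^ N_G) ^ (m' + 1))
        ≤ K * Real.exp (N' * (Real.log m) ^ 2) := by
  set c := ω * r_g / 2
  set α := log (K₂ * r * K₁)
  refine ⟨K₁ * exp (2 * α ^ 2 / (4 * c)), (N_G + 2) / log 2 + 2 * ((N_G + 1 : ℕ) : ℝ) ^ 2 / (4 * c),
    by positivity, by positivity, fun m hm ↦ ?_⟩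
  have hm0 : (0 : ℝ) < m := by positivity
  have hterm k (_ : k ∈ range (m + 1)) := vgrowth_term_le hK₁ hK₂ hr hω hrg hm0 N_G k
  calc _ ≤ ((m : ℝ) + 1) * (K₁ * (m : ℝ) ^ N_G
          * exp (log (K₂ * r * K₁ * (m : ℝ) ^ (N_G + 1)) ^ 2 / (4 * c))) := by
        simpa using sum_le_card_nsmul _ _ _ hterm
    _ ≤ ((m : ℝ) + 1) * (K₁ * (m : ℝ) ^ N_G
          * exp ((2 * α ^ 2 + 2 * ((N_G + 1 : ℕ) : ℝ) ^ 2 * log m ^ 2) / (4 * c))) := by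
        gcongr
        exact log_mul_pow_sq_le (by positivity) hm0 (N_G + 1)
    _ = K₁ * exp (2 * α ^ 2 / (4 * c)) * (((m : ℝ) + 1) * (m : ℝ) ^ N_G)
          * exp (2 * ((N_G + 1 : ℕ) : ℝ) ^ 2 / (4 * c) * log m ^ 2) := by
        rw [add_div, exp_add]
        ring_nf
    _ ≤ K₁ * exp (2 * α ^ 2 / (4 * c)) * exp ((N_G + 2) / log 2 * log m ^ 2)
          * exp (2 * ((N_G + 1 : ℕ) : ℝ) ^ 2 / (4 * c) * log m ^ 2) := by
        gcongr
        exact succ_mul_pow_le_exp_log_sq hm N_G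
    _ = _ := by
        rw [mul_assoc, ← exp_add, ← add_mul]
end
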